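/- Under the hypotheses of the retain-damage theorem, if cos θ(w) > M_r ρ / ||g_r(w)||, then L_r(w + δ_std(w)) > L_r(w + δ_rosu(w)). -/

import Mathlib

/-!
Along the segment `t ↦ w + t • δ`, a Hessian bound `M` gives the second-order Taylor estimate
`|L (w + δ) - L w - ⟪∇L w, δ⟫| ≤ M ‖δ‖² / 2`. Both perturbations have norm at most `ρ`, and the
retain-orthogonal one is orthogonal to `g_r = ∇L_r w`, so
`L_r (w + δ_rosu) ≤ L_r w + M_r ρ² / 2`, while
`L_r (w + δ_std) ≥ L_r w + ρ ‖g_r‖ cos θ - M_r ρ² / 2`.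
The alignment hypothesis says precisely that `ρ ‖g_r‖ cos θ > M_r ρ²`.
-/

open RealInnerProductSpace Set

section Taylor

variable {E F : Type*} [NormedAddCommGroup E] [NormedSpace ℝ E]
  [NormedAddCommGroup F] [NormedSpace ℝ F] {f : E → F} {x v : E} {M : ℝ}

theorem hasDerivAt_add_smul (x v : E) (t : ℝ) : HasDerivAt (fun s : ℝ => x + s • v) v t := by
  simpa using ((hasDerivAt_id t).smul_const v).const_add x

theorem norm_fderiv_fderiv_apply_self_le (f : E → F) (y v : E) :
    ‖fderiv ℝ (fderiv ℝ f) y v v‖ ≤ ‖iteratedFDeriv ℝ 2 f y‖ * ‖v‖ ^ 2 := by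
  have hnorm : ‖fderiv ℝ (fderiv ℝ f) y‖ = ‖iteratedFDeriv ℝ 2 f y‖ := by
    rw [← norm_iteratedFDeriv_one, norm_iteratedFDeriv_fderiv]
  calc ‖fderiv ℝ (fderiv ℝ f) y v v‖ ≤ ‖fderiv ℝ (fderiv ℝ f) y‖ * ‖v‖ * ‖v‖ :=
        (fderiv ℝ (fderiv ℝ f) y).le_opNorm₂ v v
    _ = ‖iteratedFDeriv ℝ 2 f y‖ * ‖v‖ ^ 2 := by rw [hnorm]; ring

theorem hasDerivAt_fderiv_add_smul_apply (hf : ContDiff ℝ 2 f) (t : ℝ) :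
    HasDerivAt (fun s : ℝ => fderiv ℝ f (x + s • v) v)
      (fderiv ℝ (fderiv ℝ f) (x + t • v) v v) t := by
  have hf' : Differentiable ℝ (fderiv ℝ f) :=
    (hf.fderiv_right (m := 1) le_rfl).differentiable one_ne_zero
  simpa using ((hf' _).hasFDerivAt.comp_hasDerivAt t (hasDerivAt_add_smul x v t)).clm_apply
    (hasDerivAt_const t v)

theorem norm_fderiv_add_smul_apply_sub_le (hf : ContDiff ℝ 2 f)
    (hM : ∀ t ∈ Icc (0 : ℝ) 1, ‖iteratedFDeriv ℝ 2 f (x + t • v)‖ ≤ M) :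
    ∀ t ∈ Icc (0 : ℝ) 1, ‖fderiv ℝ f (x + t • v) v - fderiv ℝ f x v‖ ≤ M * ‖v‖ ^ 2 * t := by
  intro t ht
  simpa using norm_image_sub_le_of_norm_deriv_le_segment'
    (fun s _ => (hasDerivAt_fderiv_add_smul_apply hf s).hasDerivWithinAt)
    (fun s hs => (norm_fderiv_fderiv_apply_self_le f _ v).trans <|
      mul_le_mul_of_nonneg_right (hM s (Ico_subset_Icc_self hs)) (by positivity)) t ht

/-- The remainder `R t = f (x + t • v) - f x - t • f' x v` has `‖R' t‖ ≤ M ‖v‖² t`, so it stays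
below the barrier `M ‖v‖² t² / 2` on `[0, 1]`. -/
theorem norm_sub_sub_fderiv_le_of_norm_iteratedFDeriv_two_le (hf : ContDiff ℝ 2 f)
    (hM : ∀ t ∈ Icc (0 : ℝ) 1, ‖iteratedFDeriv ℝ 2 f (x + t • v)‖ ≤ M) :
    ‖f (x + v) - f x - fderiv ℝ f x v‖ ≤ M * ‖v‖ ^ 2 / 2 := by
  have hR : ∀ t : ℝ, HasDerivAt (fun s : ℝ => f (x + s • v) - f x - s • fderiv ℝ f x v)
      (fderiv ℝ f (x + t • v) v - fderiv ℝ f x v) t := fun t =>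
    (((hf.differentiable two_ne_zero _).hasFDerivAt.comp_hasDerivAt t
      (hasDerivAt_add_smul x v t)).sub_const (f x)).sub
        (((hasDerivAt_id t).smul_const (fderiv ℝ f x v)).congr_deriv (one_smul ℝ _))
  have hB : ∀ t : ℝ, HasDerivAt (fun s : ℝ => M * ‖v‖ ^ 2 * s ^ 2 / 2) (M * ‖v‖ ^ 2 * t) t :=
    fun t => (((hasDerivAt_pow 2 t).const_mul (M * ‖v‖ ^ 2)).div_const 2).congr_deriv
      (by push_cast; ring)
  simpa using image_norm_le_of_norm_deriv_right_le_deriv_boundary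
    (fun t _ => (hR t).continuousAt.continuousWithinAt)
    (fun t _ => (hR t).hasDerivWithinAt) (by simp) hB
    (fun t ht => norm_fderiv_add_smul_apply_sub_le hf hM t (Ico_subset_Icc_self ht))
    (right_mem_Icc.2 zero_le_one)

end Taylor

section InnerProduct

variable {E : Type*} [NormedAddCommGroup E] [InnerProductSpace ℝ E]

theorem norm_div_norm_smul_le {ρ : ℝ} (hρ : 0 ≤ ρ) (v : E) : ‖(ρ / ‖v‖) • v‖ ≤ ρ := by
  rcases eq_or_ne v 0 with rfl | hv
  · simpa using hρ
  · rw [norm_smul, Real.norm_of_nonneg (by positivity), div_mul_cancel₀ _ (norm_ne_zero_iff.2 hv)]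

theorem real_inner_sub_inner_div_norm_sq_smul_self (u v : E) :
    ⟪v, u - (⟪u, v⟫ / ‖v‖ ^ 2) • v⟫ = 0 := by
  rcases eq_or_ne v 0 with rfl | hv
  · simp
  · rw [inner_sub_right, real_inner_smul_right, real_inner_self_eq_norm_sq, real_inner_comm,
      div_mul_cancel₀ _ (by positivity), sub_self]

end InnerProduct

theorem rosu_strict_improvement_general {p : ℕ}
    (L_r : EuclideanSpace ℝ (Fin p) → ℝ) (M_r ρ : ℝ) (hρ : 0 < ρ)
    (w g_f g_r : EuclideanSpace ℝ (Fin p))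
    (hgr : g_r = gradient L_r w) (hgrne : g_r ≠ 0)
    (q : EuclideanSpace ℝ (Fin p))
    (hq : q = g_f - (⟪g_f, g_r⟫ / ‖g_r‖ ^ 2) • g_r)
    (δstd δrosu : EuclideanSpace ℝ (Fin p))
    (hstd : δstd = (ρ / ‖g_f‖) • g_f) (hrosu : δrosu = (ρ / ‖q‖) • q)
    (hC : ContDiff ℝ 2 L_r)
    (hM1 : ∀ t : ℝ, t ∈ Set.Icc (0 : ℝ) 1 →
      ‖iteratedFDeriv ℝ 2 L_r (w + t • δstd)‖ ≤ M_r)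
    (hM2 : ∀ t : ℝ, t ∈ Set.Icc (0 : ℝ) 1 →
      ‖iteratedFDeriv ℝ 2 L_r (w + t • δrosu)‖ ≤ M_r)
    (halign : ⟪g_f, g_r⟫ / (‖g_f‖ * ‖g_r‖) > M_r * ρ / ‖g_r‖) :
    L_r (w + δstd) > L_r (w + δrosu) := by
  have hM : 0 ≤ M_r := (norm_nonneg _).trans (hM1 0 ⟨le_rfl, zero_le_one⟩)
  have hfderiv : ∀ v, fderiv ℝ L_r w v = ⟪g_r, v⟫ := fun v => by rw [hgr, inner_gradient_left]
  have hstd_sq : M_r * ‖δstd‖ ^ 2 ≤ M_r * ρ ^ 2 := by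
    gcongr; exact hstd ▸ norm_div_norm_smul_le hρ.le g_f
  have hrosu_sq : M_r * ‖δrosu‖ ^ 2 ≤ M_r * ρ ^ 2 := by
    gcongr; exact hrosu ▸ norm_div_norm_smul_le hρ.le q
  have hrosu_orth : ⟪g_r, δrosu⟫ = 0 := by
    rw [hrosu, real_inner_smul_right, hq, real_inner_sub_inner_div_norm_sq_smul_self, mul_zero]
  have hstd_gain : M_r * ρ ^ 2 < ⟪g_r, δstd⟫ := by
    rw [← div_div, gt_iff_lt, div_lt_div_iff_of_pos_right (norm_pos_iff.2 hgrne)] at halign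
    calc M_r * ρ ^ 2 = ρ * (M_r * ρ) := by ring
      _ < ρ * (⟪g_f, g_r⟫ / ‖g_f‖) := mul_lt_mul_of_pos_left halign hρ
      _ = ⟪g_r, δstd⟫ := by rw [hstd, real_inner_smul_right, real_inner_comm]; ring
  have hT_std := norm_sub_sub_fderiv_le_of_norm_iteratedFDeriv_two_le hC hM1
  have hT_rosu := norm_sub_sub_fderiv_le_of_norm_iteratedFDeriv_two_le hC hM2
  rw [Real.norm_eq_abs, abs_le, hfderiv] at hT_std hT_rosu
  linarith [hT_std.1, hT_rosu.2]

/-- Strict improvement of ROSU over the standard perturbation in the positive-alignment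
regime: if `cos θ > M_r ρ / ‖g_r‖`, then `L_r (w + δ_std) > L_r (w + δ_rosu)`. -/
theorem rosu_strict_improvement {p : ℕ}
    (L_r : EuclideanSpace ℝ (Fin p) → ℝ) (M_r ρ : ℝ) (hρ : 0 < ρ)
    (w g_f g_r : EuclideanSpace ℝ (Fin p))
    (hgf : g_f ≠ 0) (hgr : g_r = gradient L_r w) (hgrne : g_r ≠ 0)
    (q : EuclideanSpace ℝ (Fin p))
    (hq : q = g_f - (⟪g_f, g_r⟫ / ‖g_r‖ ^ 2) • g_r) (hqne : q ≠ 0)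
    (δstd δrosu : EuclideanSpace ℝ (Fin p))
    (hstd : δstd = (ρ / ‖g_f‖) • g_f) (hrosu : δrosu = (ρ / ‖q‖) • q)
    (hC : ContDiff ℝ 2 L_r)
    (hM1 : ∀ t : ℝ, t ∈ Set.Icc (0 : ℝ) 1 →
      ‖iteratedFDeriv ℝ 2 L_r (w + t • δstd)‖ ≤ M_r)
    (hM2 : ∀ t : ℝ, t ∈ Set.Icc (0 : ℝ) 1 →
      ‖iteratedFDeriv ℝ 2 L_r (w + t • δrosu)‖ ≤ M_r)
    (halign : ⟪g_f, g_r⟫ / (‖g_f‖ * ‖g_r‖) > M_r * ρ / ‖g_r‖) :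
    L_r (w + δstd) > L_r (w + δrosu) :=
  rosu_strict_improvement_general L_r M_r ρ hρ w g_f g_r hgr hgrne q hq δstd δrosu hstd hrosu hC hM1
    hM2 halign
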